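/- arXiv:1501.06021 — 5 statements merged into one kernel-verified Lean document; each statement's English description precedes it below -/
import Mathlib

section
/- Let V be a finite-dimensional real inner product space, A : V → V symmetric positive definite, and P₁,…,P_N the A-orthogonal projections onto subspaces V₁,…,V_N ⊆ V. For η > 0 define R = η · Σᵢ Pᵢ A⁻¹. Then R is symmetric with respect to the inner product of V and positive definite, provided Σᵢ Vᵢ = V. -/
open RealInnerProductSpace

/-- The additive Schwarz smoother `R = η Σᵢ Pᵢ A⁻¹` built from A-orthogonal
projections onto subspaces covering `V` is L²-symmetric and positive definite. -/
theorem additive_schwarz_smoother_spd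
    {V : Type*} [NormedAddCommGroup V] [InnerProductSpace ℝ V] [FiniteDimensional ℝ V]
    {N : ℕ} (A Ainv : V →ₗ[ℝ] V)
    (hAsym : ∀ x y : V, ⟪A x, y⟫ = ⟪x, A y⟫)
    (hApos : ∀ x : V, x ≠ 0 → 0 < ⟪A x, x⟫)
    (hAinv : A ∘ₗ Ainv = LinearMap.id ∧ Ainv ∘ₗ A = LinearMap.id)
    (Vs : Fin N → Submodule ℝ V) (P : Fin N → (V →ₗ[ℝ] V))
    (hPmem : ∀ i, ∀ x : V, P i x ∈ Vs i)
    (hPorth : ∀ i, ∀ x : V, ∀ v ∈ Vs i, ⟪A (x - P i x), v⟫ = 0)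
    (hcover : (⨆ i, Vs i) = ⊤)
    (η : ℝ) (hη : 0 < η)
    (R : V →ₗ[ℝ] V) (hR : R = η • ∑ i, (P i) ∘ₗ Ainv) :
    (∀ x y : V, ⟪R x, y⟫ = ⟪x, R y⟫) ∧ (∀ x : V, x ≠ 0 → 0 < ⟪R x, x⟫) := by
  obtain ⟨hAR, hAL⟩ := hAinv
  have hAA : ∀ x : V, A (Ainv x) = x := by
    intro x
    have := LinearMap.ext_iff.mp hAR x
    simpa using this
  -- key identity
  have key : ∀ i (u w : V), ⟪P i u, A w⟫ = ⟪A (P i u), P i w⟫ := by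
    intro i u w
    have h2 : ⟪A (P i u), w - P i w⟫ = 0 := by
      rw [hAsym, real_inner_comm]
      exact hPorth i w (P i u) (hPmem i u)
    have h3 : ⟪A (P i u), w⟫ - ⟪A (P i u), P i w⟫ = 0 := by
      rw [← inner_sub_right]; exact h2
    have h1 : ⟪P i u, A w⟫ = ⟪A (P i u), w⟫ := (hAsym (P i u) w).symm
    linarith
  have symm_term : ∀ i (x y : V), ⟪P i (Ainv x), y⟫ = ⟪x, P i (Ainv y)⟫ := by
    intro i x y
    calc ⟪P i (Ainv x), y⟫ = ⟪P i (Ainv x), A (Ainv y)⟫ := by rw [hAA y]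
      _ = ⟪A (P i (Ainv x)), P i (Ainv y)⟫ := key i _ _
      _ = ⟪P i (Ainv x), A (P i (Ainv y))⟫ := hAsym _ _
      _ = ⟪A (P i (Ainv y)), P i (Ainv x)⟫ := real_inner_comm _ _
      _ = ⟪P i (Ainv y), A (Ainv x)⟫ := (key i (Ainv y) (Ainv x)).symm
      _ = ⟪P i (Ainv y), x⟫ := by rw [hAA x]
      _ = ⟪x, P i (Ainv y)⟫ := real_inner_comm _ _
  constructor
  · intro x y
    simp only [hR, LinearMap.smul_apply, LinearMap.coe_sum, Finset.sum_apply,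
      LinearMap.comp_apply, real_inner_smul_left, real_inner_smul_right,
      sum_inner, inner_sum]
    congr 1
    exact Finset.sum_congr rfl fun i _ => symm_term i x y
  · intro x hx
    set u := Ainv x with hu
    have hux : A u = x := hAA x
    have term_eq : ∀ i, ⟪P i u, x⟫ = ⟪A (P i u), P i u⟫ := by
      intro i
      conv_lhs => rw [← hux]
      exact key i u u
    have term_nonneg : ∀ i, 0 ≤ ⟪A (P i u), P i u⟫ := by
      intro i
      rcases eq_or_ne (P i u) 0 with h | h
      · simp [h]
      · exact (hApos _ h).le
    have hRx : ⟪R x, x⟫ = η * ∑ i, ⟪A (P i u), P i u⟫ := by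
      simp only [hR, LinearMap.smul_apply, LinearMap.coe_sum, Finset.sum_apply,
        LinearMap.comp_apply, real_inner_smul_left, sum_inner, ← hu]
      congr 1
      exact Finset.sum_congr rfl fun i _ => term_eq i
    rw [hRx]
    apply mul_pos hη
    rcases (Finset.sum_nonneg fun i _ => term_nonneg i).lt_or_eq with h | h
    · exact h
    · exfalso
      have hzero : ∀ i, ⟪A (P i u), P i u⟫ = 0 := by
        intro i
        have := (Finset.sum_eq_zero_iff_of_nonneg fun i _ => term_nonneg i).mp h.symm
        exact this i (Finset.mem_univ i)
      have hPzero : ∀ i, P i u = 0 := by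
        intro i
        by_contra hne
        exact (hApos _ hne).ne' (hzero i)
      have hall : ∀ v : V, ⟪A u, v⟫ = 0 := by
        intro v
        have hsub : ∀ i, Vs i ≤ LinearMap.ker ((innerSL ℝ (A u)).toLinearMap) := by
          intro i w hw
          simp only [LinearMap.mem_ker, ContinuousLinearMap.coe_coe, innerSL_apply_apply]
          have := hPorth i u w hw
          rwa [hPzero i, sub_zero] at this
        have hle : (⊤ : Submodule ℝ V) ≤ LinearMap.ker ((innerSL ℝ (A u)).toLinearMap) :=
          hcover ▸ iSup_le hsub
        have hv := hle (Submodule.mem_top : v ∈ (⊤ : Submodule ℝ V))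
        simpa using hv
      have hu0 : u = 0 := by
        by_contra hne
        exact (hApos _ hne).ne' (hall u)
      exact hx (by rw [← hux, hu0, map_zero])
end

section
/- Let V be a finite-dimensional real inner product space, A : V → V symmetric positive definite inducing the form A(u,v) = ⟨A u, v⟩, and let P₁,…,P_N be the A-orthogonal projections onto subspaces V₁,…,V_N with Σᵢ Vᵢ = V. Let η > 0 and R = η Σᵢ Pᵢ A⁻¹. Then for every u ∈ V, η ⟨R⁻¹ u, u⟩ = inf { Σᵢ A(uᵢ, uᵢ) : uᵢ ∈ Vᵢ, Σᵢ uᵢ = u }. -/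
open RealInnerProductSpace

/-- Lemma equivalence-2: `η⟨R⁻¹u,u⟩` equals the infimum of the sum of local
energies over all decompositions `u = Σᵢ uᵢ` with `uᵢ ∈ Vᵢ`. -/
theorem schwarz_inverse_stable_decomposition
    {V : Type*} [NormedAddCommGroup V] [InnerProductSpace ℝ V] [FiniteDimensional ℝ V]
    {N : ℕ} (A Ainv : V →ₗ[ℝ] V)
    (hAsym : ∀ x y : V, ⟪A x, y⟫ = ⟪x, A y⟫)
    (hApos : ∀ x : V, x ≠ 0 → 0 < ⟪A x, x⟫)
    (hAinv : A ∘ₗ Ainv = LinearMap.id ∧ Ainv ∘ₗ A = LinearMap.id)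
    (Vs : Fin N → Submodule ℝ V) (P : Fin N → (V →ₗ[ℝ] V))
    (hPmem : ∀ i, ∀ x : V, P i x ∈ Vs i)
    (hPorth : ∀ i, ∀ x : V, ∀ v ∈ Vs i, ⟪A (x - P i x), v⟫ = 0)
    (hcover : (⨆ i, Vs i) = ⊤)
    (η : ℝ) (hη : 0 < η)
    (R Rinv : V →ₗ[ℝ] V) (hR : R = η • ∑ i, (P i) ∘ₗ Ainv)
    (hRinv : R ∘ₗ Rinv = LinearMap.id ∧ Rinv ∘ₗ R = LinearMap.id)
    (u : V) :
    η * ⟪Rinv u, u⟫ =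
      sInf {s : ℝ | ∃ w : Fin N → V,
        (∀ i, w i ∈ Vs i) ∧ (∑ i, w i) = u ∧ s = ∑ i, ⟪A (w i), w i⟫} := by
  obtain ⟨hAA, _⟩ := hAinv
  set v := Rinv u with hv
  have asymm : ∀ x y : V, ⟪A x, y⟫ = ⟪A y, x⟫ := fun x y => by
    rw [hAsym, real_inner_comm]
  have anonneg : ∀ x : V, 0 ≤ ⟪A x, x⟫ := fun x => by
    by_cases h : x = 0
    · simp [h]
    · exact (hApos x h).le
  have aproj : ∀ i (x : V), ∀ y ∈ Vs i, ⟪A (P i x), y⟫ = ⟪A x, y⟫ := by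
    intro i x y hy
    have h := hPorth i x y hy
    rw [map_sub, inner_sub_left] at h
    linarith
  set c : Fin N → V := fun i => η • P i (Ainv v) with hc
  have hcmem : ∀ i, c i ∈ Vs i := fun i => Submodule.smul_mem _ _ (hPmem _ _)
  have hRvu : R v = u := by
    have := congrArg (fun f : V →ₗ[ℝ] V => f u) hRinv.1
    simpa using this
  have hcsum : (∑ i, c i) = u := by
    rw [← hRvu, hR]
    simp [hc, LinearMap.sum_apply, Finset.smul_sum]
  have hAAv : A (Ainv v) = v := by
    have := congrArg (fun f : V →ₗ[ℝ] V => f v) hAA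
    simpa using this
  have akey : ∀ i, ∀ y ∈ Vs i, ⟪A (c i), y⟫ = η * ⟪v, y⟫ := by
    intro i y hy
    have : ⟪A (c i), y⟫ = η * ⟪A (P i (Ainv v)), y⟫ := by
      simp [hc, real_inner_smul_left]
    rw [this, aproj i _ y hy, hAAv]
  have hsum : ∀ w : Fin N → V, (∀ i, w i ∈ Vs i) → (∑ i, w i) = u →
      (∑ i, ⟪A (c i), w i⟫) = η * ⟪v, u⟫ := by
    intro w hw hwu
    calc (∑ i, ⟪A (c i), w i⟫) = ∑ i, η * ⟪v, w i⟫ := by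
          exact Finset.sum_congr rfl fun i _ => akey i _ (hw i)
      _ = η * ⟪v, ∑ i, w i⟫ := by rw [inner_sum, Finset.mul_sum]
      _ = η * ⟪v, u⟫ := by rw [hwu]
  have hself : (∑ i, ⟪A (c i), c i⟫) = η * ⟪v, u⟫ := hsum c hcmem hcsum
  have hmem : η * ⟪v, u⟫ ∈ {s : ℝ | ∃ w : Fin N → V,
      (∀ i, w i ∈ Vs i) ∧ (∑ i, w i) = u ∧ s = ∑ i, ⟪A (w i), w i⟫} :=
    ⟨c, hcmem, hcsum, hself.symm⟩
  have hlb : ∀ s ∈ {s : ℝ | ∃ w : Fin N → V,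
      (∀ i, w i ∈ Vs i) ∧ (∑ i, w i) = u ∧ s = ∑ i, ⟪A (w i), w i⟫},
      η * ⟪v, u⟫ ≤ s := by
    rintro s ⟨w, hw, hwu, rfl⟩
    have h1 : ∀ i, 2 * ⟪A (c i), w i⟫ - ⟪A (c i), c i⟫ ≤ ⟪A (w i), w i⟫ := by
      intro i
      have h0 := anonneg (w i - c i)
      have hexp : ⟪A (w i - c i), w i - c i⟫ =
          ⟪A (w i), w i⟫ - 2 * ⟪A (c i), w i⟫ + ⟪A (c i), c i⟫ := by
        rw [map_sub, inner_sub_left, inner_sub_right, inner_sub_right]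
        rw [asymm (w i) (c i)]
        ring
      rw [hexp] at h0
      linarith
    have h2 : (∑ i, (2 * ⟪A (c i), w i⟫ - ⟪A (c i), c i⟫)) ≤ ∑ i, ⟪A (w i), w i⟫ :=
      Finset.sum_le_sum fun i _ => h1 i
    have h3 : (∑ i, (2 * ⟪A (c i), w i⟫ - ⟪A (c i), c i⟫))
        = 2 * (η * ⟪v, u⟫) - (η * ⟪v, u⟫) := by
      rw [Finset.sum_sub_distrib, ← Finset.mul_sum, hsum w hw hwu, hself]
    rw [h3] at h2
    linarith
  exact le_antisymm (le_csInf ⟨_, hmem⟩ hlb) (csInf_le ⟨_, hlb⟩ hmem)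
end

section
/- Let V be a finite-dimensional real Hilbert space with A symmetric positive definite, and K : V → V self-adjoint in the A-inner product with spectrum in [0,1]. Then for every u ∈ V and every positive integer m, A((I − K) K^{2m} u, u) ≤ (1/(2m)) · A((I − K^{2m}) u, u). -/
/-!
Equip `V` with the energy inner product `⟪A x, y⟫`, in which `K` is symmetric; by the spectral
theorem its nonnegative spectrum makes it a positive operator, and then so are all its powers.
For `g i = ⟪A ((1 - K) (K ^ i u)), u⟫` the difference `g i - g (i + 1)` is the energy product of
`K ^ i (1 - K) u` with `(1 - K) u`, hence `g` is antitone. The sum `g 0 + ⋯ + g (n - 1)` telescopes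
to `⟪A ((1 - K ^ n) u), u⟫` and bounds `n * g n` from above; take `n = 2 m`.
-/

open RealInnerProductSpace

namespace LinearMap

section RCLike

variable {𝕜 E : Type*} [RCLike 𝕜] [NormedAddCommGroup E] [InnerProductSpace 𝕜 E]

theorem IsPositive.conj_of_isSymmetric {T S : E →ₗ[𝕜] E} (hT : T.IsPositive)
    (hS : S.IsSymmetric) : (S * T * S).IsPositive := by
  refine ⟨fun x y => ?_, fun x => ?_⟩
  · simp only [Module.End.mul_apply, hS _ y, hT.isSymmetric _ (S y), hS x]
  · simp only [Module.End.mul_apply, hS _ x]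
    exact hT.re_inner_nonneg_left (S x)

theorem IsPositive.pow {T : E →ₗ[𝕜] E} (hT : T.IsPositive) : ∀ n : ℕ, (T ^ n).IsPositive
  | 0 => by simp
  | 1 => by simpa using hT
  | n + 2 => by
    rw [pow_succ, pow_succ']
    exact (hT.pow n).conj_of_isSymmetric hT.isSymmetric

end RCLike

variable {E : Type*} [NormedAddCommGroup E] [InnerProductSpace ℝ E]

theorem IsSymmetric.isPositive_of_spectrum_nonneg [FiniteDimensional ℝ E] {T : E →ₗ[ℝ] E}
    (hT : T.IsSymmetric) (hspec : ∀ μ ∈ spectrum ℝ T, 0 ≤ μ) : T.IsPositive := by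
  refine (isPositive_iff T).mpr ⟨hT, fun x => ?_⟩
  let b := hT.eigenvectorBasis rfl
  rw [← b.repr.inner_map_map, EuclideanSpace.inner_eq_star_dotProduct]
  refine Finset.sum_nonneg fun i _ => ?_
  rw [star_trivial, hT.eigenvectorBasis_apply_self_apply, mul_left_comm]
  exact mul_nonneg (hspec _ (hT.hasEigenvalue_eigenvalues rfl i).mem_spectrum) (mul_self_nonneg _)

theorem IsPositive.antitone_inner_one_sub_mul_pow {T : E →ₗ[ℝ] E} (hT : T.IsPositive) (x : E) :
    Antitone fun i : ℕ => ⟪(1 - T) ((T ^ i) x), x⟫ := by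
  refine antitone_nat_of_succ_le fun i => sub_nonneg.mp ?_
  have hdiff : (1 - T) * T ^ i - (1 - T) * T ^ (i + 1) = (1 - T) * T ^ i * (1 - T) := by
    rw [pow_succ, ← mul_assoc, mul_sub, mul_one]
  have hconj := (hT.pow i).conj_of_isSymmetric (IsSymmetric.one.sub hT.isSymmetric)
  have hnonneg := hconj.inner_nonneg_left x
  rwa [← hdiff, sub_apply, inner_sub_left] at hnonneg

theorem sum_range_inner_one_sub_mul_pow (T : E →ₗ[ℝ] E) (x : E) (n : ℕ) :
    ∑ i ∈ Finset.range n, ⟪(1 - T) ((T ^ i) x), x⟫ = ⟪(1 - T ^ n) x, x⟫ := by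
  rw [← mul_neg_geom_sum, ← sum_inner]
  simp [Finset.mul_sum]

theorem IsPositive.nat_mul_inner_one_sub_mul_pow_le {T : E →ₗ[ℝ] E} (hT : T.IsPositive) (x : E)
    (n : ℕ) : n * ⟪(1 - T) ((T ^ n) x), x⟫ ≤ ⟪(1 - T ^ n) x, x⟫ := by
  rw [← sum_range_inner_one_sub_mul_pow]
  simpa using Finset.card_nsmul_le_sum (Finset.range n) _ _ fun i hi =>
    hT.antitone_inner_one_sub_mul_pow x (Finset.mem_range.mp hi).le

end LinearMap

/-- A copy of `V`, to carry the energy inner product `⟪A x, y⟫` without clashing with the inner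
product of `V`. -/
def EnergySpace (V : Type*) : Type _ := V

section EnergySpace

variable {V : Type*} [NormedAddCommGroup V] [InnerProductSpace ℝ V]

instance : AddCommGroup (EnergySpace V) := inferInstanceAs (AddCommGroup V)

instance : Module ℝ (EnergySpace V) := inferInstanceAs (Module ℝ V)

instance [FiniteDimensional ℝ V] : FiniteDimensional ℝ (EnergySpace V) :=
  inferInstanceAs (FiniteDimensional ℝ V)

abbrev energyInnerCore (A : V →ₗ[ℝ] V) (hAsym : ∀ x y : V, ⟪A x, y⟫ = ⟪x, A y⟫)
    (hApos : ∀ x : V, x ≠ 0 → 0 < ⟪A x, x⟫) : InnerProductSpace.Core ℝ (EnergySpace V) where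
  inner x y := ⟪A x, y⟫
  conj_inner_symm x y := (hAsym y x).trans (real_inner_comm _ _)
  re_inner_nonneg := show ∀ x : V, 0 ≤ ⟪A x, x⟫ from fun x => by
    obtain rfl | hx := eq_or_ne x 0
    · simp
    · exact (hApos x hx).le
  definite x hx := by
    by_contra hx'
    exact (hApos x hx').ne' hx
  add_left := show ∀ x y z : V, ⟪A (x + y), z⟫ = ⟪A x, z⟫ + ⟪A y, z⟫ from fun x y z => by
    rw [map_add, inner_add_left]
  smul_left := show ∀ (x y : V) (r : ℝ), ⟪A (r • x), y⟫ = r * ⟪A x, y⟫ from fun x y r => by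
    rw [map_smul, real_inner_smul_left]

theorem nat_mul_energy_inner_one_sub_mul_pow_le [FiniteDimensional ℝ V]
    (A : V →ₗ[ℝ] V) (hAsym : ∀ x y : V, ⟪A x, y⟫ = ⟪x, A y⟫)
    (hApos : ∀ x : V, x ≠ 0 → 0 < ⟪A x, x⟫) (K : Module.End ℝ V)
    (hKsym : ∀ x y : V, ⟪A (K x), y⟫ = ⟪A x, K y⟫) (hKspec : ∀ μ ∈ spectrum ℝ K, 0 ≤ μ)
    (u : V) (n : ℕ) :
    n * ⟪A ((1 - K) ((K ^ n) u)), u⟫ ≤ ⟪A ((1 - K ^ n) u), u⟫ := by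
  let := (energyInnerCore A hAsym hApos).toNormedAddCommGroup
  let := InnerProductSpace.ofCore (energyInnerCore A hAsym hApos).toCore
  let K' : Module.End ℝ (EnergySpace V) := K
  have hK' : K'.IsPositive := LinearMap.IsSymmetric.isPositive_of_spectrum_nonneg hKsym hKspec
  exact hK'.nat_mul_inner_one_sub_mul_pow_le u n

end EnergySpace

/-- Averaging/telescoping inequality:
`A((I−K)K^{2m}u, u) ≤ (1/(2m)) A((I−K^{2m})u, u)`. -/
theorem smoothing_averaging
    {V : Type*} [NormedAddCommGroup V] [InnerProductSpace ℝ V] [FiniteDimensional ℝ V]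
    (A : V →ₗ[ℝ] V)
    (hAsym : ∀ x y : V, ⟪A x, y⟫ = ⟪x, A y⟫)
    (hApos : ∀ x : V, x ≠ 0 → 0 < ⟪A x, x⟫)
    (K : Module.End ℝ V)
    (hKsym : ∀ x y : V, ⟪A (K x), y⟫ = ⟪A x, K y⟫)
    (hKspec : spectrum ℝ K ⊆ Set.Icc (0 : ℝ) 1)
    (u : V) (m : ℕ) (hm : 1 ≤ m) :
    ⟪A ((1 - K) ((K ^ (2 * m)) u)), u⟫ ≤
      (1 / (2 * (m : ℝ))) * ⟪A ((1 - K ^ (2 * m)) u), u⟫ := by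
  have h := nat_mul_energy_inner_one_sub_mul_pow_le A hAsym hApos K hKsym
    (fun μ hμ => (hKspec hμ).1) u (2 * m)
  have hpos : (0 : ℝ) < 2 * m := by positivity
  rw [one_div_mul_eq_div, le_div_iff₀ hpos, mul_comm]
  exact_mod_cast h
end

section
/- Let V be a finite-dimensional real Hilbert space with symmetric positive definite operator A and A-inner product A(·,·). Let P be the A-orthogonal projection onto a subspace W ⊆ V, let R be symmetric positive definite (L²), and K = I − R A with spectrum in [0,1] (A-self-adjoint). Assume there is β > 0 such that ⟨R⁻¹ (I−P) v, (I−P) v⟩ ≤ β · A((I−P)v, (I−P)v) for all v ∈ V. Then for all u ∈ V and all m ≥ 1, A((I − P) K^m u, K^m u) ≤ β · A((I − K) K^{2m} u, u). -/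
open RealInnerProductSpace

/-- Core appendix estimate: the coarse-grid-complement energy after `m`
smoothing steps is bounded by `β` times the smoothing decrease. -/
theorem coarse_complement_smoothing_bound
    {V : Type*} [NormedAddCommGroup V] [InnerProductSpace ℝ V] [FiniteDimensional ℝ V]
    (A R Rinv : V →ₗ[ℝ] V)
    (hAsym : ∀ x y : V, ⟪A x, y⟫ = ⟪x, A y⟫)
    (hApos : ∀ x : V, x ≠ 0 → 0 < ⟪A x, x⟫)
    (hRsym : ∀ x y : V, ⟪R x, y⟫ = ⟪x, R y⟫)
    (hRpos : ∀ x : V, x ≠ 0 → 0 < ⟪R x, x⟫)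
    (hRinv : R ∘ₗ Rinv = LinearMap.id ∧ Rinv ∘ₗ R = LinearMap.id)
    (W : Submodule ℝ V) (P : V →ₗ[ℝ] V)
    (hPmem : ∀ x : V, P x ∈ W)
    (hPorth : ∀ x : V, ∀ v ∈ W, ⟪A (x - P x), v⟫ = 0)
    (K : Module.End ℝ V) (hK : K = LinearMap.id - R ∘ₗ A)
    (hKsym : ∀ x y : V, ⟪A (K x), y⟫ = ⟪A x, K y⟫)
    (hKspec : spectrum ℝ K ⊆ Set.Icc (0 : ℝ) 1)
    (β : ℝ) (hβ : 0 < β)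
    (hsmooth : ∀ v : V, ⟪Rinv (v - P v), v - P v⟫ ≤ β * ⟪A (v - P v), v - P v⟫)
    (u : V) (m : ℕ) (hm : 1 ≤ m) :
    ⟪A ((K ^ m) u - P ((K ^ m) u)), (K ^ m) u⟫ ≤
      β * ⟪A ((1 - K) ((K ^ (2 * m)) u)), u⟫ := by
  have hRR : ∀ z : V, R (Rinv z) = z := fun z => LinearMap.congr_fun hRinv.1 z
  have hRR' : ∀ z : V, Rinv (R z) = z := fun z => LinearMap.congr_fun hRinv.2 z
  -- Rinv symmetric
  have hIsym : ∀ x y : V, ⟪Rinv x, y⟫ = ⟪x, Rinv y⟫ := by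
    intro x y
    calc ⟪Rinv x, y⟫ = ⟪Rinv x, R (Rinv y)⟫ := by rw [hRR]
      _ = ⟪R (Rinv x), Rinv y⟫ := by rw [real_inner_comm, hRsym, real_inner_comm]
      _ = ⟪x, Rinv y⟫ := by rw [hRR]
  -- Rinv psd
  have hIpsd : ∀ z : V, 0 ≤ ⟪Rinv z, z⟫ := by
    intro z
    by_cases hz : z = 0
    · simp [hz]
    · have h1 : ⟪Rinv z, z⟫ = ⟪R (Rinv z), Rinv z⟫ := by
        rw [hRsym, hRR]
      have h2 : Rinv z ≠ 0 := fun h => hz (by rw [← hRR z, h, map_zero])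
      rw [h1]; exact le_of_lt (hRpos _ h2)
  -- Cauchy-Schwarz for the Rinv form
  have hCS : ∀ x y : V, ⟪Rinv x, y⟫ ^ 2 ≤ ⟪Rinv x, x⟫ * ⟪Rinv y, y⟫ := by
    intro x y
    have h := discrim_le_zero (a := ⟪Rinv y, y⟫) (b := 2 * ⟪Rinv x, y⟫) (c := ⟪Rinv x, x⟫) ?_
    · rw [discrim] at h; nlinarith [h]
    · intro t
      have := hIpsd (x + t • y)
      have hxy : ⟪Rinv y, x⟫ = ⟪Rinv x, y⟫ := by
        rw [hIsym, real_inner_comm]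
      simp only [map_add, map_smul, inner_add_left, inner_add_right,
        inner_smul_left, inner_smul_right, RCLike.conj_to_real] at this
      rw [hxy] at this
      nlinarith [this]
  -- K^n is A-selfadjoint
  have hKpow : ∀ (n : ℕ) (x y : V), ⟪A ((K ^ n) x), y⟫ = ⟪A x, (K ^ n) y⟫ := by
    intro n
    induction n with
    | zero => intro x y; simp
    | succ n ih =>
      intro x y
      have h1 : (K ^ (n + 1)) x = (K ^ n) (K x) := by
        rw [pow_succ]; rfl
      have h2 : (K ^ (n + 1)) y = K ((K ^ n) y) := by
        rw [pow_succ']; rfl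
      rw [h1, ih (K x) y, hKsym, h2]
  set v := (K ^ m) u with hv
  set w := v - P v with hw
  -- LHS = ⟪A w, w⟫
  have hL : ⟪A w, v⟫ = ⟪A w, w⟫ := by
    have h0 : ⟪A w, P v⟫ = 0 := hPorth v (P v) (hPmem v)
    have hvs : w + P v = v := by rw [hw]; abel
    calc ⟪A w, v⟫ = ⟪A w, w + P v⟫ := by rw [hvs]
      _ = ⟪A w, w⟫ + ⟪A w, P v⟫ := inner_add_right _ _ _
      _ = ⟪A w, w⟫ := by rw [h0, add_zero]
  -- (1 - K) z = R (A z)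
  have hIK : ∀ z : V, (1 - K) z = R (A z) := by
    intro z
    have h1 : K z = z - R (A z) := by rw [hK]; rfl
    have h2 : (1 - K) z = z - K z := rfl
    rw [h2, h1]; abel
  -- RHS inner product equals ⟪R (A v), A v⟫
  have hKv : (1 - K) ((K ^ (2 * m)) u) = (K ^ m) ((1 - K) v) := by
    have hc : Commute (K ^ m) (1 - K) :=
      (Commute.one_right _).sub_right ((Commute.refl K).pow_left m)
    have : (1 - K) * (K ^ (2*m)) = (K ^ m) * ((1 - K) * (K ^ m)) := by
      rw [two_mul, pow_add, ← mul_assoc, ← mul_assoc, hc.eq]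
    calc (1 - K) ((K ^ (2 * m)) u) = ((1 - K) * (K ^ (2*m))) u := rfl
      _ = ((K ^ m) * ((1 - K) * (K ^ m))) u := by rw [this]
      _ = (K ^ m) ((1 - K) v) := rfl
  have hR : ⟪A ((1 - K) ((K ^ (2 * m)) u)), u⟫ = ⟪R (A v), A v⟫ := by
    rw [hKv, hKpow m, ← hv, hIK, hAsym, real_inner_comm]
  -- key quantities
  set a := ⟪A w, w⟫ with ha
  set b := ⟪R (A v), A v⟫ with hb
  have hb0 : 0 ≤ b := by
    by_cases h : A v = 0
    · simp [hb, h]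
    · exact le_of_lt (hRpos _ h)
  have ha0 : 0 ≤ a := by
    by_cases h : w = 0
    · simp [ha, h]
    · exact le_of_lt (hApos _ h)
  -- ⟪A w, w⟫ = ⟪Rinv w, R (A v)⟫
  have hmid : a = ⟪Rinv w, R (A v)⟫ := by
    have : ⟪Rinv w, R (A v)⟫ = ⟪w, A v⟫ := by
      rw [← hRsym, hRR]
    rw [this, ← hAsym, hL]
  have hsm : ⟪Rinv w, w⟫ ≤ β * a := hsmooth v
  have hcs := hCS w (R (A v))
  have h2 : ⟪Rinv (R (A v)), R (A v)⟫ = b := by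
    rw [hRR', real_inner_comm]
  rw [h2] at hcs
  have key : a ^ 2 ≤ (β * a) * b := by
    calc a ^ 2 = ⟪Rinv w, R (A v)⟫ ^ 2 := by rw [hmid]
      _ ≤ ⟪Rinv w, w⟫ * b := hcs
      _ ≤ (β * a) * b := by
          rcases eq_or_lt_of_le hb0 with h | h
          · rw [← h]; simp
          · exact mul_le_mul_of_nonneg_right hsm (le_of_lt h)
  have hab : a ≤ β * b := by
    rcases eq_or_lt_of_le ha0 with h | h
    · rw [← h]; positivity
    · nlinarith
  rw [hL, hR]
  exact hab
end

section
/- Let V, Q be finite-dimensional inner product spaces with B : V → Q linear, ε > 0, X_ε = {(u,p) : Bu = εp}. Suppose operators ℛ on V×Q and R on V satisfy: ℛ preserves X_ε and for (u,p) ∈ X_ε, the velocity component of ℛ(u,p) is R u; similarly for prolongations ℐ, I and coarse solves. Define recursively the V-cycle operators ℬ_ℓ (mixed) and B_ℓ (primal) by ℬ₀ = 𝒜₀⁻¹, B₀ = A₀⁻¹ and B_ℓ = R^m (I − I_ℓ(I − B_{ℓ−1}) A_{ℓ−1}^{−1} I_{ℓ−1}^t A_ℓ) R^m, with the analogous recursion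 for ℬ_ℓ. If each component operator preserves X_ε and agrees with its primal counterpart on velocity components, then ℬ_ℓ preserves X_ε and for (u,p) ∈ X_ε the velocity component of ℬ_ℓ(u,p) equals B_ℓ u. -/
/-- A mixed operator `T` on `V × Q` is compatible with a primal operator `t` on
`V` if it preserves the constrained subspace `X_ε = {(u,p) : Bu = εp}` and its
velocity component agrees with `t` there. -/
def MGCompat {V Q : Type*} [NormedAddCommGroup V] [InnerProductSpace ℝ V]
    [NormedAddCommGroup Q] [InnerProductSpace ℝ Q]
    (B : V →ₗ[ℝ] Q) (ε : ℝ)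
    (T : Module.End ℝ (V × Q)) (t : Module.End ℝ V) : Prop :=
  ∀ u : V, ∀ p : Q, B u = ε • p →
    B ((T (u, p)).1) = ε • ((T (u, p)).2) ∧ (T (u, p)).1 = t u

/-- Theorem (equivalence): if smoother, prolongation and coarse solve each
preserve `X_ε` and agree with their primal counterparts, then the recursively
defined V-cycle operators do as well. -/
theorem vcycle_mixed_primal_equivalence
    {V Q : Type*} [NormedAddCommGroup V] [InnerProductSpace ℝ V] [FiniteDimensional ℝ V]
    [NormedAddCommGroup Q] [InnerProductSpace ℝ Q] [FiniteDimensional ℝ Q]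
    (B : V →ₗ[ℝ] Q) (ε : ℝ) (hε : 0 < ε)
    (m : ℕ → ℕ)
    (calR : ℕ → Module.End ℝ (V × Q)) (Rp : ℕ → Module.End ℝ V)
    (calI : ℕ → Module.End ℝ (V × Q)) (Ip : ℕ → Module.End ℝ V)
    (calC : ℕ → Module.End ℝ (V × Q)) (Cp : ℕ → Module.End ℝ V)
    (calB : ℕ → Module.End ℝ (V × Q)) (Bp : ℕ → Module.End ℝ V)
    (hR : ∀ ℓ, MGCompat B ε (calR ℓ) (Rp ℓ))
    (hI : ∀ ℓ, MGCompat B ε (calI ℓ) (Ip ℓ))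
    (hC : ∀ ℓ, MGCompat B ε (calC ℓ) (Cp ℓ))
    (h0 : MGCompat B ε (calB 0) (Bp 0))
    (hrecp : ∀ ℓ : ℕ, 1 ≤ ℓ →
      Bp ℓ = (Rp ℓ) ^ (m ℓ) * (1 - Ip ℓ * (1 - Bp (ℓ - 1)) * Cp ℓ) * (Rp ℓ) ^ (m ℓ))
    (hrecm : ∀ ℓ : ℕ, 1 ≤ ℓ →
      calB ℓ = (calR ℓ) ^ (m ℓ) *
        (1 - calI ℓ * (1 - calB (ℓ - 1)) * calC ℓ) * (calR ℓ) ^ (m ℓ)) :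
    ∀ ℓ, MGCompat B ε (calB ℓ) (Bp ℓ) := by
  have hmul : ∀ (T S : Module.End ℝ (V × Q)) (t s : Module.End ℝ V),
      MGCompat B ε T t → MGCompat B ε S s → MGCompat B ε (T * S) (t * s) := by
    intro T S t s hT hS u p hup
    obtain ⟨h1, h2⟩ := hS u p hup
    have key := hT (S (u, p)).1 (S (u, p)).2 h1
    simp only [Prod.mk.eta] at key
    rw [h2] at key
    simpa [Module.End.mul_apply] using key
  have hsub : ∀ (T : Module.End ℝ (V × Q)) (t : Module.End ℝ V),
      MGCompat B ε T t → MGCompat B ε (1 - T) (1 - t) := by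
    intro T t hT u p hup
    obtain ⟨h1, h2⟩ := hT u p hup
    constructor
    · simp [LinearMap.sub_apply, hup, h1, smul_sub]
    · simp [LinearMap.sub_apply, h2]
  have hpow : ∀ (T : Module.End ℝ (V × Q)) (t : Module.End ℝ V),
      MGCompat B ε T t → ∀ n : ℕ, MGCompat B ε (T ^ n) (t ^ n) := by
    intro T t hT n
    induction n with
    | zero => intro u p hup; simp [hup]
    | succ k ih =>
        have := hmul T (T ^ k) t (t ^ k) hT ih
        simpa [pow_succ'] using this
  intro ℓ
  induction ℓ with
  | zero => exact h0
  | succ k ih =>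
      rw [hrecm (k + 1) (Nat.le_add_left 1 k), hrecp (k + 1) (Nat.le_add_left 1 k)]
      simp only [Nat.add_sub_cancel]
      exact hmul _ _ _ _
        (hmul _ _ _ _ (hpow _ _ (hR (k + 1)) (m (k + 1)))
          (hsub _ _ (hmul _ _ _ _ (hmul _ _ _ _ (hI (k + 1)) (hsub _ _ ih)) (hC (k + 1)))))
        (hpow _ _ (hR (k + 1)) (m (k + 1)))
end
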